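/- arXiv:2605.03945 — 3 statements merged into one kernel-verified Lean document; each statement's English description precedes it below -/
import Mathlib

section
/- Let λ ≥ 0 and u > 0 be constants and let C > 0. Suppose n and v satisfy n ≥ 10·C·max{λ,1}/u and |u - v| ≤ C/n, with v > 0 and (λ+1)u - λv > 0. Then (λ+1)·log u - λ·log v - log((λ+1)u - λv) ≤ 2λ(λ+1)C²/(3n²u²). -/
/-!
Write `v = u (1 - s)` with `s = (u - v) / u`, so that `(λ + 1) u - λ v = u (1 + λ s)` and the left
side becomes `-λ log (1 - s) - log (1 + λ s)`. The hypothesis on `n` makes `|s|` and `λ |s|` at most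
`1 / 10`, and in that range `log (1 + x) ≥ x - (2/3) x²`; the linear terms cancel, leaving
`(2/3) λ (λ + 1) s²` with `|s| ≤ C / (n u)`.
-/

open Real

/-- Second-order Taylor bound; the remainder `|x|³ / (1 - |x|) ≤ x² / 9` is absorbed into `2 / 3`. -/
lemma sub_two_thirds_mul_sq_le_log_one_add {x : ℝ} (hx : |x| ≤ 1 / 10) :
    x - 2 / 3 * x ^ 2 ≤ log (1 + x) := by
  have htaylor := abs_log_sub_add_sum_range_le (x := -x) (by rw [abs_neg]; linarith) 2
  norm_num [Finset.sum_range_succ] at htaylor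
  have hcube : |x| ^ 3 / (1 - |x|) ≤ x ^ 2 / 9 := by
    rw [div_le_div_iff₀ (by linarith) (by norm_num), ← sq_abs x]
    nlinarith [abs_nonneg x, sq_nonneg |x|]
  linarith [neg_abs_le (-x + x ^ 2 / 2 + log (1 + x)), sq_nonneg x]

lemma neg_mul_log_one_sub_sub_log_one_add_mul_le {lam s : ℝ} (hlam : 0 ≤ lam)
    (hs : |s| ≤ 1 / 10) (hlams : lam * |s| ≤ 1 / 10) :
    -lam * log (1 - s) - log (1 + lam * s) ≤ 2 / 3 * lam * (lam + 1) * s ^ 2 := by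
  have hneg : -s - 2 / 3 * (-s) ^ 2 ≤ log (1 + -s) :=
    sub_two_thirds_mul_sq_le_log_one_add (by rwa [abs_neg])
  have hmul : lam * s - 2 / 3 * (lam * s) ^ 2 ≤ log (1 + lam * s) :=
    sub_two_thirds_mul_sq_le_log_one_add (by rwa [abs_mul, abs_of_nonneg hlam])
  rw [← sub_eq_add_neg] at hneg
  nlinarith [mul_le_mul_of_nonneg_left hneg hlam]

lemma add_one_mul_log_sub_mul_log_sub_log_le {lam u v : ℝ} (hlam : 0 ≤ lam) (hu : 0 < u)
    (huv : max lam 1 * |u - v| ≤ u / 10) :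
    (lam + 1) * log u - lam * log v - log ((lam + 1) * u - lam * v)
      ≤ 2 / 3 * lam * (lam + 1) * ((u - v) / u) ^ 2 := by
  set s := (u - v) / u with hs_def
  have habs : |s| = |u - v| / u := by rw [hs_def, abs_div, abs_of_pos hu]
  have hs : |s| ≤ 1 / 10 := by
    rw [habs, div_le_iff₀ hu]
    nlinarith [le_max_right lam 1, abs_nonneg (u - v)]
  have hlams : lam * |s| ≤ 1 / 10 := by
    rw [habs, mul_div_assoc', div_le_iff₀ hu]
    nlinarith [le_max_left lam 1, abs_nonneg (u - v)]
  have hv : v = u * (1 - s) := by rw [hs_def]; field_simp; ring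
  have hmix : (lam + 1) * u - lam * v = u * (1 + lam * s) := by rw [hv]; ring
  have h1s : 0 < 1 - s := by linarith [le_abs_self s]
  have h1lams : 0 < 1 + lam * s := by
    nlinarith [neg_abs_le s, mul_le_mul_of_nonneg_left (neg_abs_le s) hlam]
  rw [hmix, hv, log_mul hu.ne' h1s.ne', log_mul hu.ne' h1lams.ne']
  linarith [neg_mul_log_one_sub_sub_log_one_add_mul_le hlam hs hlams]

theorem stmt_1_general (lam u v C n : ℝ) (hlam : 0 ≤ lam) (hu : 0 < u) (hC : 0 < C)
    (hn : n ≥ 10 * C * max lam 1 / u) (hv : |u - v| ≤ C / n) :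
    (lam + 1) * Real.log u - lam * Real.log v - Real.log ((lam + 1) * u - lam * v)
      ≤ 2 * lam * (lam + 1) * C^2 / (3 * n^2 * u^2) := by
  have hmax : 0 < max lam 1 := lt_max_of_lt_right one_pos
  have hn0 : 0 < n := lt_of_lt_of_le (by positivity) hn
  have hnu : 10 * C * max lam 1 ≤ n * u := by rwa [ge_iff_le, div_le_iff₀ hu] at hn
  have huv : max lam 1 * |u - v| ≤ u / 10 := by
    calc max lam 1 * |u - v| ≤ max lam 1 * (C / n) := by gcongr
      _ ≤ u / 10 := by rw [mul_div_assoc', div_le_iff₀ hn0]; linarith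
  have hsq : ((u - v) / u) ^ 2 ≤ (C / (n * u)) ^ 2 := by
    rw [← sq_abs, abs_div, abs_of_pos hu, ← div_div]
    gcongr
  calc _ ≤ 2 / 3 * lam * (lam + 1) * ((u - v) / u) ^ 2 :=
        add_one_mul_log_sub_mul_log_sub_log_le hlam hu huv
    _ ≤ 2 / 3 * lam * (lam + 1) * (C / (n * u)) ^ 2 := by gcongr
    _ = 2 * lam * (lam + 1) * C^2 / (3 * n^2 * u^2) := by field_simp

theorem stmt_1 (lam u v C n : ℝ) (hlam : 0 ≤ lam) (hu : 0 < u) (hC : 0 < C)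
    (hn : n ≥ 10 * C * max lam 1 / u) (hv : |u - v| ≤ C / n) (hv' : 0 < v)
    (hpos : 0 < (lam + 1) * u - lam * v) :
    (lam + 1) * Real.log u - lam * Real.log v - Real.log ((lam + 1) * u - lam * v)
      ≤ 2 * lam * (lam + 1) * C^2 / (3 * n^2 * u^2) :=
  stmt_1_general lam u v C n hlam hu hC hn hv
end

section
/- Let P = N(μ₁, Σ₁) and Q = N(μ₂, Σ₂) be m-dimensional Gaussians with positive definite covariances, and let α ∈ (0,1) ∪ (1,∞) be such that Σ_α := (1-α)Σ₁ + αΣ₂ is positive definite. Then ∫ p(x)^α q(x)^{1-α} dx = (|Σ₂|^{α/2} |Σ₁|^{(1-α)/2} / |Σ_α|^{1/2}) · exp(-(α(1-α)/2)·(μ₁ - μ₂)ᵀ Σ_α^{-1} (μ₁ - μ₂)), where p, q are the densities of P, Q. -/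
open MeasureTheory Real Matrix

/-!
Up to constants, `log (p^α q^(1-α))` is a quadratic in `x` with Hessian
`M = α Σ₁⁻¹ + (1 - α) Σ₂⁻¹`. Since `Σ₁ M Σ₂ = Σ_α`, completing the square leaves the constant
`α (1 - α) (μ₁ - μ₂)ᵀ Σ_α⁻¹ (μ₁ - μ₂)` and gives `|M| = |Σ_α| / (|Σ₁| |Σ₂|)`. The matrix `M` is
positive definite (for `α > 1` one sees this on its inverse), so the remaining integral is the
Gaussian integral `(2π)^(m/2) |M|^(-1/2)`, computed by writing `M = Cᵀ C` and substituting
`x ↦ C x`.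
-/

/-- Density of an `m`-dimensional Gaussian with mean `μ` and covariance `S`. -/
noncomputable def mvGaussianPDF (m : ℕ) (μ : Fin m → ℝ) (S : Matrix (Fin m) (Fin m) ℝ)
    (x : Fin m → ℝ) : ℝ :=
  (2 * π) ^ (-(m : ℝ) / 2) * S.det ^ (-(1:ℝ) / 2) *
    Real.exp (-(1/2) * ((x - μ) ⬝ᵥ S⁻¹ *ᵥ (x - μ)))

section GaussianIntegral

variable {ι : Type*} [Fintype ι]

theorem integral_exp_neg_half_dotProduct_self :
    ∫ x : ι → ℝ, exp (-(1 / 2) * (x ⬝ᵥ x)) = (2 * π) ^ ((Fintype.card ι : ℝ) / 2) := by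
  have h1 : ∫ t : ℝ, exp (-(1 / 2) * t ^ 2) = √(2 * π) := by
    rw [integral_gaussian, show π / (1 / 2) = 2 * π by ring]
  have hprod : ∀ x : ι → ℝ, exp (-(1 / 2) * (x ⬝ᵥ x)) = ∏ i, exp (-(1 / 2) * x i ^ 2) := by
    intro x
    rw [← exp_sum, dotProduct, Finset.mul_sum]
    simp only [sq]
  simp_rw [hprod]
  rw [volume_pi, integral_fintype_prod_eq_pow (fun t : ℝ => exp (-(1 / 2) * t ^ 2)), h1,
    sqrt_eq_rpow, ← rpow_mul_natCast (by positivity)]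
  ring_nf

theorem integral_comp_mulVec [DecidableEq ι] {C : Matrix ι ι ℝ} (hC : C.det ≠ 0)
    {f : (ι → ℝ) → ℝ} (hf : Continuous f) : ∫ x, f (C *ᵥ x) = |C.det|⁻¹ * ∫ y, f y := by
  have hmeas : AEMeasurable (toLin' C) (volume : Measure (ι → ℝ)) :=
    (LinearMap.continuous_of_finiteDimensional _).measurable.aemeasurable
  rw [← abs_inv]
  calc ∫ x, f (C *ᵥ x) = ∫ y, f y ∂(Measure.map (toLin' C) volume) :=
        (integral_map hmeas hf.aestronglyMeasurable).symm
    _ = _ := by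
        rw [Real.map_matrix_volume_pi_eq_smul_volume_pi hC, integral_smul_measure,
          ENNReal.toReal_ofReal (abs_nonneg _), smul_eq_mul]

open scoped MatrixOrder in
theorem integral_exp_neg_half_quadForm [DecidableEq ι] {M : Matrix ι ι ℝ} (hM : M.PosDef) :
    ∫ x : ι → ℝ, exp (-(1 / 2) * (x ⬝ᵥ M *ᵥ x))
      = (2 * π) ^ ((Fintype.card ι : ℝ) / 2) * M.det ^ (-(1 : ℝ) / 2) := by
  obtain ⟨C, hC, rfl⟩ := CStarAlgebra.isStrictlyPositive_iff_eq_star_mul_self.mp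
    hM.isStrictlyPositive
  have hdet : (star C * C).det = C.det ^ 2 := by
    rw [det_mul, star_eq_conjTranspose, det_conjTranspose, star_trivial, sq]
  have hquad : ∀ x, x ⬝ᵥ (star C * C) *ᵥ x = (C *ᵥ x) ⬝ᵥ (C *ᵥ x) := by
    intro x
    rw [← mulVec_mulVec, dotProduct_mulVec, star_eq_conjTranspose,
      conjTranspose_eq_transpose_of_trivial, vecMul_transpose]
  simp_rw [hquad]
  rw [integral_comp_mulVec ((isUnit_iff_isUnit_det C).mp hC).ne_zero
      (f := fun y => exp (-(1 / 2) * (y ⬝ᵥ y))) (by fun_prop),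
    integral_exp_neg_half_dotProduct_self, hdet, ← sqrt_sq_eq_abs, sqrt_eq_rpow, ← rpow_neg_one,
    ← rpow_mul (sq_nonneg _)]
  ring_nf

end GaussianIntegral

section QuadForm

variable {R n : Type*} [CommRing R] [Fintype n]

theorem dotProduct_mulVec_comm_of_isSymm {A : Matrix n n R} (hA : A.IsSymm) (x y : n → R) :
    x ⬝ᵥ A *ᵥ y = y ⬝ᵥ A *ᵥ x := by
  rw [dotProduct_mulVec, ← mulVec_transpose, hA.eq, dotProduct_comm]

variable [DecidableEq n]

theorem inv_quadForm_add_smul_mulVec {S : Matrix n n R} (hS : S.IsSymm) (hdet : IsUnit S.det)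
    (y w : n → R) (t : R) :
    (y + t • S *ᵥ w) ⬝ᵥ S⁻¹ *ᵥ (y + t • S *ᵥ w)
      = y ⬝ᵥ S⁻¹ *ᵥ y + 2 * t * (y ⬝ᵥ w) + t ^ 2 * (w ⬝ᵥ S *ᵥ w) := by
  have hinv : S⁻¹ *ᵥ (S *ᵥ w) = w := by
    rw [mulVec_mulVec, nonsing_inv_mul S hdet, one_mulVec]
  have hcross : (S *ᵥ w) ⬝ᵥ S⁻¹ *ᵥ y = y ⬝ᵥ w := by
    rw [dotProduct_mulVec_comm_of_isSymm hS.inv, hinv]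
  simp only [mulVec_add, mulVec_smul, dotProduct_add, add_dotProduct, dotProduct_smul,
    smul_dotProduct, hinv, hcross, smul_eq_mul, dotProduct_comm (S *ᵥ w) w]
  ring

/-- The centre `c` is chosen so that `x - μ₁ = (x - c) - b S₁ w` and `x - μ₂ = (x - c) + a S₂ w`,
where `w = (b S₁ + a S₂)⁻¹ (μ₁ - μ₂)`. -/
theorem smul_inv_quadForm_add_smul_inv_quadForm {S₁ S₂ : Matrix n n R} (hS₁ : S₁.IsSymm)
    (hS₂ : S₂.IsSymm) (hdet₁ : IsUnit S₁.det) (hdet₂ : IsUnit S₂.det) {a b : R}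
    (hdet : IsUnit (b • S₁ + a • S₂).det) (μ₁ μ₂ x : n → R) :
    let c := μ₁ - b • S₁ *ᵥ (b • S₁ + a • S₂)⁻¹ *ᵥ (μ₁ - μ₂)
    a * ((x - μ₁) ⬝ᵥ S₁⁻¹ *ᵥ (x - μ₁)) + b * ((x - μ₂) ⬝ᵥ S₂⁻¹ *ᵥ (x - μ₂))
      = (x - c) ⬝ᵥ (a • S₁⁻¹ + b • S₂⁻¹) *ᵥ (x - c)
        + a * b * ((μ₁ - μ₂) ⬝ᵥ (b • S₁ + a • S₂)⁻¹ *ᵥ (μ₁ - μ₂)) := by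
  intro c
  set w := (b • S₁ + a • S₂)⁻¹ *ᵥ (μ₁ - μ₂)
  have hw : (b • S₁ + a • S₂) *ᵥ w = μ₁ - μ₂ := by
    rw [mulVec_mulVec, mul_nonsing_inv _ hdet, one_mulVec]
  have hsplit : b • S₁ *ᵥ w + a • S₂ *ᵥ w = μ₁ - μ₂ := by
    rw [← hw, add_mulVec, smul_mulVec, smul_mulVec]
  have hx₁ : x - μ₁ = (x - c) + (-b) • S₁ *ᵥ w := by
    simp only [c, neg_smul]; abel
  have hx₂ : x - μ₂ = (x - c) + a • S₂ *ᵥ w := by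
    rw [show x - μ₂ = (x - μ₁) + (μ₁ - μ₂) by abel, hx₁, ← hsplit, neg_smul]; abel
  rw [hx₁, hx₂, inv_quadForm_add_smul_mulVec hS₁ hdet₁, inv_quadForm_add_smul_mulVec hS₂ hdet₂,
    ← hw]
  simp only [add_mulVec, smul_mulVec, dotProduct_add, add_dotProduct, dotProduct_smul,
    smul_dotProduct, smul_eq_mul, dotProduct_comm (S₁ *ᵥ w) w, dotProduct_comm (S₂ *ᵥ w) w]
  ring

theorem mul_smul_inv_add_smul_inv_mul {S₁ S₂ : Matrix n n R} (hdet₁ : IsUnit S₁.det)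
    (hdet₂ : IsUnit S₂.det) (a b : R) :
    S₁ * (a • S₁⁻¹ + b • S₂⁻¹) * S₂ = b • S₁ + a • S₂ := by
  rw [mul_add, add_mul, Matrix.mul_smul, Matrix.smul_mul, mul_nonsing_inv _ hdet₁, one_mul,
    Matrix.mul_smul, Matrix.smul_mul, mul_assoc, nonsing_inv_mul _ hdet₂, mul_one, add_comm]

theorem det_smul_inv_add_smul_inv {S₁ S₂ : Matrix n n ℝ} (hdet₁ : S₁.det ≠ 0)
    (hdet₂ : S₂.det ≠ 0) (a b : ℝ) :
    (a • S₁⁻¹ + b • S₂⁻¹).det = (b • S₁ + a • S₂).det / (S₁.det * S₂.det) := by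
  rw [← mul_smul_inv_add_smul_inv_mul hdet₁.isUnit hdet₂.isUnit, det_mul, det_mul]
  field_simp

theorem posDef_smul_inv_add_sub_smul_inv {S₁ S₂ : Matrix n n ℝ} (h₁ : S₁.PosDef)
    (h₂ : S₂.PosDef) {α : ℝ} (hα : 0 < α) (hαpd : ((1 - α) • S₁ + α • S₂).PosDef) :
    (α • S₁⁻¹ + (1 - α) • S₂⁻¹).PosDef := by
  rcases le_or_gt α 1 with hle | hgt
  · exact (h₁.inv.smul hα).add_posSemidef (h₂.inv.posSemidef.smul (sub_nonneg.2 hle))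
  -- for `α > 1` the inverse `P = S₂ Sα⁻¹ S₁ = α⁻¹ (S₁ + (α - 1) S₁ Sα⁻¹ S₁)` is positive definite
  set Sα := (1 - α) • S₁ + α • S₂
  have hdet₁ := h₁.det_pos.ne'.isUnit
  set P := S₂ * Sα⁻¹ * S₁
  have hinv : (α • S₁⁻¹ + (1 - α) • S₂⁻¹) * P = 1 := by
    calc _ = S₁⁻¹ * (S₁ * (α • S₁⁻¹ + (1 - α) • S₂⁻¹) * S₂) * Sα⁻¹ * S₁ := by
          simp only [P, ← mul_assoc, nonsing_inv_mul _ hdet₁, one_mul]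
      _ = 1 := by
          rw [mul_smul_inv_add_smul_inv_mul hdet₁ h₂.det_pos.ne'.isUnit, mul_assoc S₁⁻¹,
            mul_nonsing_inv _ hαpd.det_pos.ne'.isUnit, mul_one, nonsing_inv_mul _ hdet₁]
  have hαP : α • P = S₁ + (α - 1) • (S₁ᴴ * Sα⁻¹ * S₁) := by
    have hS₂ : α • S₂ = Sα + (α - 1) • S₁ := by simp only [Sα]; module
    rw [← Matrix.smul_mul, ← Matrix.smul_mul, hS₂, h₁.isHermitian.eq, add_mul, add_mul,
      mul_nonsing_inv _ hαpd.det_pos.ne'.isUnit, one_mul, Matrix.smul_mul, Matrix.smul_mul]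
  have hP : P.PosDef := by
    rw [← inv_smul_smul₀ hα.ne' P, hαP]
    exact (h₁.add_posSemidef ((hαpd.inv.posSemidef.conjTranspose_mul_mul_same S₁).smul
      (by linarith))).smul (inv_pos.2 hα)
  rw [← inv_eq_left_inv hinv]
  exact hP.inv

end QuadForm

theorem mvGaussianPDF_eq_exp (m : ℕ) (μ : Fin m → ℝ) {S : Matrix (Fin m) (Fin m) ℝ}
    (hS : 0 < S.det) (x : Fin m → ℝ) :
    mvGaussianPDF m μ S x = exp (-(m / 2) * log (2 * π) - (1 / 2) * log S.det
      - (1 / 2) * ((x - μ) ⬝ᵥ S⁻¹ *ᵥ (x - μ))) := by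
  rw [mvGaussianPDF, rpow_def_of_pos (by positivity), rpow_def_of_pos hS, ← exp_add, ← exp_add]
  ring_nf

theorem mvGaussianPDF_rpow_mul_rpow (m : ℕ) (μ₁ μ₂ : Fin m → ℝ)
    {S₁ S₂ : Matrix (Fin m) (Fin m) ℝ} (h₁ : S₁.PosDef) (h₂ : S₂.PosDef) {α : ℝ}
    (hdet : IsUnit ((1 - α) • S₁ + α • S₂).det) (x : Fin m → ℝ) :
    let c := μ₁ - (1 - α) • S₁ *ᵥ ((1 - α) • S₁ + α • S₂)⁻¹ *ᵥ (μ₁ - μ₂)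
    mvGaussianPDF m μ₁ S₁ x ^ α * mvGaussianPDF m μ₂ S₂ x ^ (1 - α)
      = exp (-(m / 2) * log (2 * π) - α / 2 * log S₁.det - (1 - α) / 2 * log S₂.det
          - α * (1 - α) / 2 * ((μ₁ - μ₂) ⬝ᵥ ((1 - α) • S₁ + α • S₂)⁻¹ *ᵥ (μ₁ - μ₂)))
        * exp (-(1 / 2) * ((x - c) ⬝ᵥ (α • S₁⁻¹ + (1 - α) • S₂⁻¹) *ᵥ (x - c))) := by
  intro c
  have hsq := smul_inv_quadForm_add_smul_inv_quadForm
    (isHermitian_iff_isSymm.mp h₁.isHermitian) (isHermitian_iff_isSymm.mp h₂.isHermitian)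
    h₁.det_pos.ne'.isUnit h₂.det_pos.ne'.isUnit hdet μ₁ μ₂ x
  rw [mvGaussianPDF_eq_exp m μ₁ h₁.det_pos, mvGaussianPDF_eq_exp m μ₂ h₂.det_pos,
    ← exp_mul, ← exp_mul, ← exp_add, ← exp_add]
  congr 1
  linear_combination (-(1 / 2) : ℝ) * hsq

theorem stmt_5_general (m : ℕ) (μ₁ μ₂ : Fin m → ℝ) (S1 S2 : Matrix (Fin m) (Fin m) ℝ)
    (h1 : S1.PosDef) (h2 : S2.PosDef) (α : ℝ) (hα : 0 < α)
    (hαpd : ((1 - α) • S1 + α • S2).PosDef) :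
    (∫ x : Fin m → ℝ, mvGaussianPDF m μ₁ S1 x ^ α * mvGaussianPDF m μ₂ S2 x ^ (1 - α))
      = (S2.det ^ (α / 2) * S1.det ^ ((1 - α) / 2) / ((1 - α) • S1 + α • S2).det ^ ((1:ℝ) / 2))
        * Real.exp (-(α * (1 - α) / 2) *
            ((μ₁ - μ₂) ⬝ᵥ ((1 - α) • S1 + α • S2)⁻¹ *ᵥ (μ₁ - μ₂))) := by
  have hd₁ := h1.det_pos
  have hd₂ := h2.det_pos
  have hdα := hαpd.det_pos
  simp_rw [mvGaussianPDF_rpow_mul_rpow m μ₁ μ₂ h1 h2 hdα.ne'.isUnit]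
  rw [integral_const_mul, integral_sub_right_eq_self
      (fun y => exp (-(1 / 2) * (y ⬝ᵥ (α • S1⁻¹ + (1 - α) • S2⁻¹) *ᵥ y))),
    integral_exp_neg_half_quadForm (posDef_smul_inv_add_sub_smul_inv h1 h2 hα hαpd),
    det_smul_inv_add_smul_inv hd₁.ne' hd₂.ne', Fintype.card_fin,
    rpow_def_of_pos (by positivity : (0 : ℝ) < 2 * π), rpow_def_of_pos (by positivity),
    rpow_def_of_pos hd₂, rpow_def_of_pos hd₁, rpow_def_of_pos hdα,
    log_div hdα.ne' (by positivity), log_mul hd₁.ne' hd₂.ne']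
  simp only [← exp_add, ← exp_sub]
  congr 1
  ring

/-- Closed form of `∫ p(x)^α q(x)^{1-α} dx` for two multivariate Gaussians. -/
theorem stmt_5 (m : ℕ) (μ₁ μ₂ : Fin m → ℝ) (S1 S2 : Matrix (Fin m) (Fin m) ℝ)
    (h1 : S1.PosDef) (h2 : S2.PosDef) (α : ℝ) (hα : 0 < α) (hα1 : α ≠ 1)
    (hαpd : ((1 - α) • S1 + α • S2).PosDef) :
    (∫ x : Fin m → ℝ, mvGaussianPDF m μ₁ S1 x ^ α * mvGaussianPDF m μ₂ S2 x ^ (1 - α))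
      = (S2.det ^ (α / 2) * S1.det ^ ((1 - α) / 2) / ((1 - α) • S1 + α • S2).det ^ ((1:ℝ) / 2))
        * Real.exp (-(α * (1 - α) / 2) *
            ((μ₁ - μ₂) ⬝ᵥ ((1 - α) • S1 + α • S2)⁻¹ *ᵥ (μ₁ - μ₂))) :=
  stmt_5_general m μ₁ μ₂ S1 S2 h1 h2 α hα hαpd
end

section
/- Let Σ₁, Σ₂ be positive definite m×m matrices, μ₁, μ₂ ∈ ℝ^m, and α ∈ ℝ such that A := αΣ₁^{-1} + (1-α)Σ₂^{-1} and Σ_α := (1-α)Σ₁ + αΣ₂ are positive definite. Set b := αΣ₁^{-1}μ₁ + (1-α)Σ₂^{-1}μ₂ and c₀ := α·μ₁ᵀΣ₁^{-1}μ₁ + (1-α)·μ₂ᵀΣ₂^{-1}μ₂. Then c₀ - bᵀA^{-1}b = α(1-α)·(μ₁ - μ₂)ᵀ Σ_α^{-1} (μ₁ - μ₂). -/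
/-!
Put `P = Σ₁⁻¹`, `Q = Σ₂⁻¹` and `A = αP + (1 - α)Q`. Since `Σ₂ A Σ₁ = Σ₁ A Σ₂ = Σ_α`, both `P A⁻¹ Q`
and `Q A⁻¹ P` equal `M = Σ_α⁻¹`; multiplying `A⁻¹ A = 1` on the left by `P` and by `Q` then gives
`α P A⁻¹ P = P - (1 - α) M` and `(1 - α) Q A⁻¹ Q = Q - α M`. Expanding `bᵀ A⁻¹ b` into its four
blocks (`P` and `Q` are symmetric) leaves `α (1 - α) (μ₁ - μ₂)ᵀ M (μ₁ - μ₂)`.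
-/

open Matrix

namespace Matrix

variable {n R : Type*} [Fintype n] [CommRing R]

theorem mulVec_dotProduct_mulVec_mulVec {k l : Type*} [Fintype k] [Fintype l] {P : Matrix n n R}
    (hP : P.IsSymm) (B : Matrix n k R) (Q : Matrix k l R) (x : n → R) (y : l → R) :
    (P *ᵥ x) ⬝ᵥ B *ᵥ (Q *ᵥ y) = x ⬝ᵥ (P * B * Q) *ᵥ y := by
  rw [mulVec_mulVec, dotProduct_mulVec, ← vecMul_transpose, hP.eq, vecMul_vecMul,
    ← dotProduct_mulVec, Matrix.mul_assoc]

variable [DecidableEq n]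

theorem smul_quadForm_add_smul_quadForm_sub_quadForm {P Q B M : Matrix n n R} {a b : R}
    (hP : P.IsSymm) (hQ : Q.IsSymm) (hB : B * (a • P + b • Q) = 1)
    (hPQ : P * B * Q = M) (hQP : Q * B * P = M) (u v : n → R) :
    a * (u ⬝ᵥ P *ᵥ u) + b * (v ⬝ᵥ Q *ᵥ v)
      - (a • P *ᵥ u + b • Q *ᵥ v) ⬝ᵥ B *ᵥ (a • P *ᵥ u + b • Q *ᵥ v)
      = a * b * ((u - v) ⬝ᵥ M *ᵥ (u - v)) := by
  have hPBP : a • (P * B * P) + b • M = P := by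
    simpa only [Matrix.mul_add, Matrix.mul_smul, Matrix.mul_one, ← Matrix.mul_assoc, hPQ]
      using congrArg (P * ·) hB
  have hQBQ : a • M + b • (Q * B * Q) = Q := by
    simpa only [Matrix.mul_add, Matrix.mul_smul, Matrix.mul_one, ← Matrix.mul_assoc, hQP]
      using congrArg (Q * ·) hB
  have hu := congrArg (u ⬝ᵥ · *ᵥ u) hPBP
  have hv := congrArg (v ⬝ᵥ · *ᵥ v) hQBQ
  simp only [add_mulVec, smul_mulVec, dotProduct_add, dotProduct_smul, smul_eq_mul] at hu hv
  simp only [mulVec_add, dotProduct_add, add_dotProduct, mulVec_smul, smul_dotProduct,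
    dotProduct_smul, smul_eq_mul, mulVec_dotProduct_mulVec_mulVec hP,
    mulVec_dotProduct_mulVec_mulVec hQ, hPQ, hQP, mulVec_sub, sub_dotProduct, dotProduct_sub]
  linear_combination (-a) * hu - b * hv

theorem mul_smul_inv_add_smul_inv_mul {S T : Matrix n n R} (hS : IsUnit S.det)
    (hT : IsUnit T.det) (a b : R) : S * (a • S⁻¹ + b • T⁻¹) * T = b • S + a • T := by
  rw [Matrix.mul_add, Matrix.add_mul, Matrix.mul_smul, Matrix.smul_mul, mul_nonsing_inv S hS,
    Matrix.one_mul, Matrix.mul_smul, Matrix.smul_mul, nonsing_inv_mul_cancel_right T S hT,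
    add_comm]

theorem inv_mul_inv_smul_add_smul_inv_mul_inv {S T : Matrix n n R} (hS : IsUnit S.det)
    (hT : IsUnit T.det) (a b : R) :
    S⁻¹ * (a • S⁻¹ + b • T⁻¹)⁻¹ * T⁻¹ = (b • S + a • T)⁻¹ := by
  rw [← add_comm (a • T), ← add_comm (b • T⁻¹), ← mul_smul_inv_add_smul_inv_mul hT hS b a,
    mul_inv_rev, mul_inv_rev, Matrix.mul_assoc]

theorem inv_mul_inv_smul_add_smul_inv_mul_inv' {S T : Matrix n n R} (hS : IsUnit S.det)
    (hT : IsUnit T.det) (a b : R) :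
    T⁻¹ * (a • S⁻¹ + b • T⁻¹)⁻¹ * S⁻¹ = (b • S + a • T)⁻¹ := by
  rw [← mul_smul_inv_add_smul_inv_mul hS hT a b, mul_inv_rev, mul_inv_rev, Matrix.mul_assoc]

end Matrix

theorem stmt_7_general (m : ℕ) (S1 S2 : Matrix (Fin m) (Fin m) ℝ) (μ₁ μ₂ : Fin m → ℝ) (α : ℝ)
    (h1 : S1.PosDef) (h2 : S2.PosDef)
    (hA : (α • S1⁻¹ + (1 - α) • S2⁻¹).PosDef) :
    (α • (μ₁ ⬝ᵥ S1⁻¹ *ᵥ μ₁) + (1 - α) • (μ₂ ⬝ᵥ S2⁻¹ *ᵥ μ₂))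
      - (α • S1⁻¹ *ᵥ μ₁ + (1 - α) • S2⁻¹ *ᵥ μ₂) ⬝ᵥ
          (α • S1⁻¹ + (1 - α) • S2⁻¹)⁻¹ *ᵥ (α • S1⁻¹ *ᵥ μ₁ + (1 - α) • S2⁻¹ *ᵥ μ₂)
      = α * (1 - α) * ((μ₁ - μ₂) ⬝ᵥ ((1 - α) • S1 + α • S2)⁻¹ *ᵥ (μ₁ - μ₂)) := by
  have hS1 := (isUnit_iff_isUnit_det S1).mp h1.isUnit
  have hS2 := (isUnit_iff_isUnit_det S2).mp h2.isUnit
  have hsymm {S : Matrix (Fin m) (Fin m) ℝ} (h : S.PosDef) : S⁻¹.IsSymm :=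
    (isHermitian_iff_isSymm.mp h.isHermitian).inv
  simp only [smul_eq_mul]
  exact smul_quadForm_add_smul_quadForm_sub_quadForm (hsymm h1) (hsymm h2)
    (nonsing_inv_mul _ ((isUnit_iff_isUnit_det _).mp hA.isUnit))
    (inv_mul_inv_smul_add_smul_inv_mul_inv hS1 hS2 _ _)
    (inv_mul_inv_smul_add_smul_inv_mul_inv' hS1 hS2 _ _) μ₁ μ₂

theorem stmt_7 (m : ℕ) (S1 S2 : Matrix (Fin m) (Fin m) ℝ) (μ₁ μ₂ : Fin m → ℝ) (α : ℝ)
    (h1 : S1.PosDef) (h2 : S2.PosDef)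
    (hA : (α • S1⁻¹ + (1 - α) • S2⁻¹).PosDef)
    (hα : ((1 - α) • S1 + α • S2).PosDef) :
    (α • (μ₁ ⬝ᵥ S1⁻¹ *ᵥ μ₁) + (1 - α) • (μ₂ ⬝ᵥ S2⁻¹ *ᵥ μ₂))
      - (α • S1⁻¹ *ᵥ μ₁ + (1 - α) • S2⁻¹ *ᵥ μ₂) ⬝ᵥ
          (α • S1⁻¹ + (1 - α) • S2⁻¹)⁻¹ *ᵥ (α • S1⁻¹ *ᵥ μ₁ + (1 - α) • S2⁻¹ *ᵥ μ₂)
      = α * (1 - α) * ((μ₁ - μ₂) ⬝ᵥ ((1 - α) • S1 + α • S2)⁻¹ *ᵥ (μ₁ - μ₂)) :=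
  stmt_7_general m S1 S2 μ₁ μ₂ α h1 h2 hA
end
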